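/- Let X ~ P_X be a random variable in ℝ^n, F : ℝ^n → ℝ^d an encoder, G : ℝ^d → ℝ^n a differentiable decoder with ‖∇G‖_∞ ≤ L, Y = F(X), and Z ~ P_Z a random variable in ℝ^d. Then W2(P_X, P_{G(Z)}) ≤ (E‖X − G(Y)‖²)^{1/2} + L · W2(P_Y, P_Z). -/

import Mathlib

/-!
Pass through `P_{G(Y)}` with the triangle inequality for `W2`. The coupling `(X, G(F(X)))`
bounds `W2(P_X, P_{G(Y)})` by the reconstruction error, and pushing any coupling of
`(P_Y, P_Z)` forward along the `L`-Lipschitz map `G` bounds `W2(P_{G(Y)}, P_{G(Z)})` by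
`L · W2(P_Y, P_Z)`. The triangle inequality itself comes from gluing two couplings along their
common marginal (disintegrating the second one) and Minkowski's inequality in `L²`.
-/

open MeasureTheory ENNReal

noncomputable def W2 {E : Type*} [NormedAddCommGroup E] [MeasurableSpace E]
    (μ ν : Measure E) : ℝ≥0∞ :=
  ⨅ (π : Measure (E × E)) (_ : π.map Prod.fst = μ ∧ π.map Prod.snd = ν),
    (∫⁻ p, (‖p.1 - p.2‖₊ : ℝ≥0∞) ^ 2 ∂π) ^ (1/2 : ℝ)

open ProbabilityTheory

section Coupling

variable {α β γ : Type*} [MeasurableSpace α] [MeasurableSpace β] [MeasurableSpace γ]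

structure IsCoupling (μ : Measure α) (ν : Measure β) (π : Measure (α × β)) : Prop where
  map_fst : π.map Prod.fst = μ
  map_snd : π.map Prod.snd = ν

theorem isCoupling_map_prodMk {Ω : Type*} [MeasurableSpace Ω] {P : Measure Ω} {X : Ω → α}
    {Y : Ω → β} (hX : Measurable X) (hY : Measurable Y) :
    IsCoupling (P.map X) (P.map Y) (P.map fun ω => (X ω, Y ω)) where
  map_fst := by rw [Measure.map_map measurable_fst (hX.prodMk hY)]; rfl
  map_snd := by rw [Measure.map_map measurable_snd (hX.prodMk hY)]; rfl

theorem isCoupling_prod (μ : Measure α) (ν : Measure β) [IsProbabilityMeasure μ]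
    [IsProbabilityMeasure ν] : IsCoupling μ ν (μ.prod ν) where
  map_fst := by simp
  map_snd := by simp

theorem IsCoupling.map {μ : Measure α} {ν : Measure β} {π : Measure (α × β)}
    (h : IsCoupling μ ν π) {f : α → γ} {g : β → γ} (hf : Measurable f) (hg : Measurable g) :
    IsCoupling (μ.map f) (ν.map g) (π.map (Prod.map f g)) where
  map_fst := by
    rw [Measure.map_map measurable_fst (hf.prodMap hg), ← h.map_fst,
      Measure.map_map hf measurable_fst]
    rfl
  map_snd := by
    rw [Measure.map_map measurable_snd (hf.prodMap hg), ← h.map_snd,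
      Measure.map_map hg measurable_snd]
    rfl

theorem Measure.exists_gluing [StandardBorelSpace γ] [Nonempty γ] (π₁ : Measure (α × β))
    (π₂ : Measure (β × γ)) [SFinite π₁] [IsFiniteMeasure π₂]
    (h : π₁.map Prod.snd = π₂.map Prod.fst) :
    ∃ τ : Measure ((α × β) × γ), τ.map Prod.fst = π₁ ∧ τ.map (fun p => (p.1.2, p.2)) = π₂ := by
  refine ⟨π₁ ⊗ₘ π₂.condKernel.comap Prod.snd measurable_snd, Measure.fst_compProd _ _, ?_⟩
  have hm : Measurable fun p : (α × β) × γ => (p.1.2, p.2) := by fun_prop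
  ext s hs
  conv_rhs => rw [← π₂.disintegrate π₂.condKernel]
  rw [Measure.map_apply hm hs, Measure.compProd_apply (hm hs), Measure.compProd_apply hs,
    Measure.fst, ← h, lintegral_map (Kernel.measurable_kernel_prodMk_left hs) measurable_snd]
  rfl

theorem IsCoupling.exists_gluing [StandardBorelSpace γ] [Nonempty γ] {μ : Measure α}
    {ν : Measure β} {ρ : Measure γ} [IsFiniteMeasure ν] {π₁ : Measure (α × β)}
    {π₂ : Measure (β × γ)} (h₁ : IsCoupling μ ν π₁) (h₂ : IsCoupling ν ρ π₂) :
    ∃ τ : Measure ((α × β) × γ), τ.map Prod.fst = π₁ ∧ τ.map (fun p => (p.1.2, p.2)) = π₂ ∧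
      IsCoupling μ ρ (τ.map fun p => (p.1.1, p.2)) := by
  have : IsFiniteMeasure (π₁.map Prod.snd) := h₁.map_snd ▸ ‹_›
  have : IsFiniteMeasure π₁ := Measure.isFiniteMeasure_of_map measurable_snd.aemeasurable
  have : IsFiniteMeasure (π₂.map Prod.fst) := h₂.map_fst ▸ ‹_›
  have : IsFiniteMeasure π₂ := Measure.isFiniteMeasure_of_map measurable_fst.aemeasurable
  obtain ⟨τ, hτ₁, hτ₂⟩ := Measure.exists_gluing π₁ π₂ (h₁.map_snd.trans h₂.map_fst.symm)
  have hm₂₃ : Measurable fun p : (α × β) × γ => (p.1.2, p.2) := by fun_prop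
  have hm₁₃ : Measurable fun p : (α × β) × γ => (p.1.1, p.2) := by fun_prop
  refine ⟨τ, hτ₁, hτ₂, ⟨?_, ?_⟩⟩
  · rw [← h₁.map_fst, ← hτ₁, Measure.map_map measurable_fst hm₁₃,
      Measure.map_map measurable_fst measurable_fst]
    rfl
  · rw [← h₂.map_snd, ← hτ₂, Measure.map_map measurable_snd hm₁₃,
      Measure.map_map measurable_snd hm₂₃]
    rfl

end Coupling

theorem eLpNorm_two_eq {E : Type*} [NormedAddCommGroup E] {Ω : Type*} [MeasurableSpace Ω]
    (f : Ω → E) (P : Measure Ω) :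
    eLpNorm f 2 P = (∫⁻ ω, (‖f ω‖₊ : ℝ≥0∞) ^ 2 ∂P) ^ (1/2 : ℝ) := by
  simp [eLpNorm_eq_lintegral_rpow_enorm_toReal two_ne_zero ofNat_ne_top, enorm_eq_nnnorm]

section Wasserstein

variable {E : Type*} [NormedAddCommGroup E] [MeasurableSpace E]

theorem W2_eq_iInf_eLpNorm (μ ν : Measure E) :
    W2 μ ν = ⨅ (π : Measure (E × E)) (_ : IsCoupling μ ν π),
      eLpNorm (fun p : E × E => p.1 - p.2) 2 π :=
  iInf_congr fun π => iInf_congr_Prop ⟨fun h => ⟨h.1, h.2⟩, fun h => ⟨h.1, h.2⟩⟩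
    fun _ => (eLpNorm_two_eq _ π).symm

theorem W2_le_eLpNorm {μ ν : Measure E} {π : Measure (E × E)} (h : IsCoupling μ ν π) :
    W2 μ ν ≤ eLpNorm (fun p : E × E => p.1 - p.2) 2 π :=
  (W2_eq_iInf_eLpNorm μ ν).symm ▸ iInf₂_le π h

variable [BorelSpace E]

theorem W2_map_le_of_lipschitzWith {E' : Type*} [NormedAddCommGroup E'] [MeasurableSpace E']
    [BorelSpace E'] [SecondCountableTopology E'] {μ ν : Measure E} [IsProbabilityMeasure μ]
    [IsProbabilityMeasure ν] {f : E → E'} {K : NNReal} (hf : LipschitzWith K f) :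
    W2 (μ.map f) (ν.map f) ≤ K * W2 μ ν := by
  have hfm : Measurable f := hf.continuous.measurable
  -- without a coupling, `W2 μ ν = ∞` and the bound fails for `K = 0` since `0 * ∞ = 0`
  have : Nonempty {π // IsCoupling μ ν π} := ⟨⟨μ.prod ν, isCoupling_prod μ ν⟩⟩
  rw [W2_eq_iInf_eLpNorm μ ν, iInf_subtype', ENNReal.mul_iInf (by simp)]
  refine le_iInf fun ⟨π, h⟩ => (W2_le_eLpNorm (h.map hfm hfm)).trans ?_
  rw [eLpNorm_map_measure (by fun_prop) (hfm.prodMap hfm).aemeasurable]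
  refine eLpNorm_le_nnreal_smul_eLpNorm_of_ae_le_mul (ae_of_all _ fun p => ?_) 2
  simpa [← nndist_eq_nnnorm] using hf.nndist_le p.1 p.2

variable [SecondCountableTopology E]

theorem W2_map_le_eLpNorm_sub {Ω : Type*} [MeasurableSpace Ω] {P : Measure Ω} {X Y : Ω → E}
    (hX : Measurable X) (hY : Measurable Y) :
    W2 (P.map X) (P.map Y) ≤ eLpNorm (X - Y) 2 P := by
  refine (W2_le_eLpNorm (isCoupling_map_prodMk hX hY)).trans_eq ?_
  rw [eLpNorm_map_measure (by fun_prop) (hX.prodMk hY).aemeasurable]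
  rfl

theorem W2_triangle [CompleteSpace E] (μ ν ρ : Measure E) [IsFiniteMeasure ν] :
    W2 μ ρ ≤ W2 μ ν + W2 ν ρ := by
  rw [W2_eq_iInf_eLpNorm μ ν, W2_eq_iInf_eLpNorm ν ρ]
  simp only [ENNReal.iInf_add, ENNReal.add_iInf]
  refine le_iInf₂ fun π₂ h₂ => le_iInf₂ fun π₁ h₁ => ?_
  obtain ⟨τ, hτ₁, hτ₂, hτ⟩ := h₁.exists_gluing h₂
  calc W2 μ ρ ≤ eLpNorm (fun p : E × E => p.1 - p.2) 2 (τ.map fun p => (p.1.1, p.2)) :=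
        W2_le_eLpNorm hτ
    _ = eLpNorm (fun p : (E × E) × E => (p.1.1 - p.1.2) + (p.1.2 - p.2)) 2 τ := by
        rw [eLpNorm_map_measure (by fun_prop) (by fun_prop)]
        simp only [sub_add_sub_cancel]
        rfl
    _ ≤ eLpNorm (fun p : (E × E) × E => p.1.1 - p.1.2) 2 τ
          + eLpNorm (fun p : (E × E) × E => p.1.2 - p.2) 2 τ :=
        eLpNorm_add_le (by fun_prop) (by fun_prop) one_le_two
    _ = eLpNorm (fun p : E × E => p.1 - p.2) 2 π₁
          + eLpNorm (fun p : E × E => p.1 - p.2) 2 π₂ := by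
        rw [← hτ₁, ← hτ₂, eLpNorm_map_measure (by fun_prop) (by fun_prop),
          eLpNorm_map_measure (by fun_prop) (by fun_prop)]
        rfl

end Wasserstein

theorem wasserstein_reconstruction_bound_general {n d : ℕ}
    {Ω : Type*} [MeasurableSpace Ω] (P : Measure Ω) [IsProbabilityMeasure P]
    (X : Ω → EuclideanSpace ℝ (Fin n)) (Z : Ω → EuclideanSpace ℝ (Fin d))
    (hX : Measurable X) (hZ : Measurable Z)
    (F : EuclideanSpace ℝ (Fin n) → EuclideanSpace ℝ (Fin d))
    (G : EuclideanSpace ℝ (Fin d) → EuclideanSpace ℝ (Fin n))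
    (hF : Measurable F) (hG : Differentiable ℝ G) (L : ℝ)
    (hgrad : ∀ z, ‖fderiv ℝ G z‖ ≤ L) :
    W2 (P.map X) (P.map (fun ω => G (Z ω))) ≤
      (∫⁻ ω, (‖X ω - G (F (X ω))‖₊ : ℝ≥0∞) ^ 2 ∂P) ^ (1/2 : ℝ)
        + ENNReal.ofReal L * W2 (P.map (fun ω => F (X ω))) (P.map Z) := by
  have hG_lip : LipschitzWith L.toNNReal G := lipschitzWith_of_nnnorm_fderiv_le hG fun z => by
    simpa [← norm_toNNReal] using Real.toNNReal_mono (hgrad z)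
  have hGm : Measurable G := hG.continuous.measurable
  have hY : Measurable fun ω => F (X ω) := hF.comp hX
  have hGY : Measurable fun ω => G (F (X ω)) := hGm.comp hY
  have := Measure.isProbabilityMeasure_map (μ := P) hY.aemeasurable
  have := Measure.isProbabilityMeasure_map (μ := P) hZ.aemeasurable
  have := Measure.isProbabilityMeasure_map (μ := P) hGY.aemeasurable
  have h_decoder := W2_map_le_of_lipschitzWith (μ := P.map fun ω => F (X ω)) (ν := P.map Z) hG_lip
  rw [Measure.map_map hGm hY, Measure.map_map hGm hZ] at h_decoder
  calc W2 (P.map X) (P.map fun ω => G (Z ω))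
      ≤ W2 (P.map X) (P.map fun ω => G (F (X ω)))
        + W2 (P.map fun ω => G (F (X ω))) (P.map fun ω => G (Z ω)) := W2_triangle _ _ _
    _ ≤ _ := by
      rw [← eLpNorm_two_eq]
      exact add_le_add (W2_map_le_eLpNorm_sub hX hGY) h_decoder

/-- Proposition 1(b): for an encoder `F`, a decoder `G` with derivative bounded by `L`, latent
code `Y = F(X)` and prior variable `Z`, we have
`W2(P_X, P_{G(Z)}) ≤ (E‖X − G(Y)‖²)^{1/2} + L · W2(P_Y, P_Z)`. -/
theorem wasserstein_reconstruction_bound {n d : ℕ}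
    {Ω : Type*} [MeasurableSpace Ω] (P : Measure Ω) [IsProbabilityMeasure P]
    (X : Ω → EuclideanSpace ℝ (Fin n)) (Z : Ω → EuclideanSpace ℝ (Fin d))
    (hX : Measurable X) (hZ : Measurable Z)
    (F : EuclideanSpace ℝ (Fin n) → EuclideanSpace ℝ (Fin d))
    (G : EuclideanSpace ℝ (Fin d) → EuclideanSpace ℝ (Fin n))
    (hF : Measurable F) (hG : Differentiable ℝ G) (L : ℝ) (hL : 0 ≤ L)
    (hgrad : ∀ z, ‖fderiv ℝ G z‖ ≤ L) :
    W2 (P.map X) (P.map (fun ω => G (Z ω))) ≤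
      (∫⁻ ω, (‖X ω - G (F (X ω))‖₊ : ℝ≥0∞) ^ 2 ∂P) ^ (1/2 : ℝ)
        + ENNReal.ofReal L * W2 (P.map (fun ω => F (X ω))) (P.map Z) :=
  wasserstein_reconstruction_bound_general P X Z hX hZ F G hF hG L hgrad
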